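/- Any copy of K_4 in the lexicographic product coloring of K_{n·n} (as defined from a coloring χ of K_n with no rainbow K_4) whose four vertices do not all lie in distinct copies and do not all lie in a single copy contains two edges of the same color; consequently the product coloring has no rainbow K_4. -/

import Mathlib

/-- The set s is rainbow for the coloring c. -/
def IsRainbowOn {V : Type*} [DecidableEq V] {ℓ : ℕ} (c : V → V → Fin ℓ)
    (s : Finset V) : Prop :=
  ∀ a ∈ s, ∀ b ∈ s, ∀ a' ∈ s, ∀ b' ∈ s,
    a ≠ b → a' ≠ b' → ({a, b} : Finset V) ≠ {a', b'} → c a b ≠ c a' b'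

def HasRainbowClique {V : Type*} [DecidableEq V] {ℓ : ℕ} (c : V → V → Fin ℓ)
    (q : ℕ) : Prop :=
  ∃ s : Finset V, s.card = q ∧ IsRainbowOn c s

/-- The lexicographic product coloring of K_{n·n} built from χ. -/
def lexColoring {n ℓ : ℕ} (χ : Fin n → Fin n → Fin ℓ) :
    Fin n × Fin n → Fin n × Fin n → Fin ℓ :=
  fun u w => if u.1 = w.1 then χ u.2 w.2 else χ u.1 w.1

/-!
A 4-set meeting some copy in two vertices `u, w` and containing a vertex `y` of another copy
is not rainbow, since `uy` and `wy` both get the color `χ(u₁, y₁)`. The remaining 4-sets lie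
in a single copy or in four distinct copies; projecting to the second, resp. first, coordinate
maps them injectively onto a 4-set of `K_n` with the same edge colors, which is not rainbow.
-/

section Rainbow

variable {V W : Type*} [DecidableEq V] [DecidableEq W] {ℓ : ℕ}

theorem IsRainbowOn.eq_of_apply_eq_right {c : V → V → Fin ℓ} {s : Finset V}
    (h : IsRainbowOn c s) {a b y : V} (ha : a ∈ s) (hb : b ∈ s) (hy : y ∈ s)
    (hay : a ≠ y) (hby : b ≠ y) (hc : c a y = c b y) : a = b := by
  by_contra hab
  refine h a ha y hy b hb y hy hay hby (fun hpair => hab ?_) hc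
  have : a ∈ ({b, y} : Finset V) := hpair ▸ Finset.mem_insert_self a {y}
  simpa [hay] using this

theorem IsRainbowOn.image {c : V → V → Fin ℓ} {d : W → W → Fin ℓ} {s : Finset V}
    (h : IsRainbowOn c s) (f : V → W)
    (hcd : ∀ u ∈ s, ∀ w ∈ s, f u ≠ f w → c u w = d (f u) (f w)) :
    IsRainbowOn d (s.image f) := by
  simp only [IsRainbowOn, Finset.mem_image]
  rintro _ ⟨u, hu, rfl⟩ _ ⟨w, hw, rfl⟩ _ ⟨u', hu', rfl⟩ _ ⟨w', hw', rfl⟩ huw hu'w' hne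
  rw [← hcd u hu w hw huw, ← hcd u' hu' w' hw' hu'w']
  refine h u hu w hw u' hu' w' hw' (ne_of_apply_ne f huw) (ne_of_apply_ne f hu'w') ?_
  rintro hpair
  exact hne (by simpa [Finset.image_insert] using congrArg (Finset.image f) hpair)

theorem IsRainbowOn.hasRainbowClique_image {c : V → V → Fin ℓ} {d : W → W → Fin ℓ}
    {s : Finset V} (h : IsRainbowOn c s) (f : V → W) (hf : Set.InjOn f s)
    (hcd : ∀ u ∈ s, ∀ w ∈ s, f u ≠ f w → c u w = d (f u) (f w)) :
    HasRainbowClique d s.card :=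
  ⟨s.image f, Finset.card_image_of_injOn hf, h.image f hcd⟩

end Rainbow

section LexColoring

variable {n ℓ : ℕ} (χ : Fin n → Fin n → Fin ℓ)

theorem lexColoring_of_fst_eq {u w : Fin n × Fin n} (h : u.1 = w.1) :
    lexColoring χ u w = χ u.2 w.2 :=
  if_pos h

theorem lexColoring_of_fst_ne {u w : Fin n × Fin n} (h : u.1 ≠ w.1) :
    lexColoring χ u w = χ u.1 w.1 :=
  if_neg h

theorem not_isRainbowOn_lexColoring_of_mixed {s : Finset (Fin n × Fin n)}
    (hsame : ∃ u ∈ s, ∃ w ∈ s, u ≠ w ∧ u.1 = w.1)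
    (hdiff : ∃ u ∈ s, ∃ w ∈ s, u.1 ≠ w.1) :
    ¬ IsRainbowOn (lexColoring χ) s := by
  obtain ⟨u, hu, w, hw, huw, hfst⟩ := hsame
  obtain ⟨y, hy, hyu⟩ : ∃ y ∈ s, u.1 ≠ y.1 := by
    obtain ⟨p, hp, q, hq, hpq⟩ := hdiff
    by_cases hpu : u.1 = p.1
    · exact ⟨q, hq, hpu ▸ hpq⟩
    · exact ⟨p, hp, hpu⟩
  have hyw : w.1 ≠ y.1 := hfst ▸ hyu
  intro hR
  refine huw (hR.eq_of_apply_eq_right hu hw hy (ne_of_apply_ne Prod.fst hyu)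
    (ne_of_apply_ne Prod.fst hyw) ?_)
  rw [lexColoring_of_fst_ne χ hyu, lexColoring_of_fst_ne χ hyw, hfst]

theorem hasRainbowClique_of_isRainbowOn_lexColoring {s : Finset (Fin n × Fin n)}
    (hR : IsRainbowOn (lexColoring χ) s) : HasRainbowClique χ s.card := by
  by_cases hsame : ∃ u ∈ s, ∃ w ∈ s, u ≠ w ∧ u.1 = w.1
  · have hsingle : ∀ u ∈ s, ∀ w ∈ s, u.1 = w.1 := by
      by_contra! hdiff
      exact not_isRainbowOn_lexColoring_of_mixed χ hsame hdiff hR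
    exact hR.hasRainbowClique_image Prod.snd
      (fun u hu w hw h => Prod.ext (hsingle u hu w hw) h)
      fun u hu w hw _ => lexColoring_of_fst_eq χ (hsingle u hu w hw)
  · push Not at hsame
    exact hR.hasRainbowClique_image Prod.fst
      (fun u hu w hw h => by_contra fun huw => hsame u hu w hw huw h)
      fun u _ w _ h => lexColoring_of_fst_ne χ h

end LexColoring

/-- Any 4-set of the product neither contained in one copy nor spread over four
distinct copies has a repeated edge color; consequently, if χ has no rainbow K₄
then neither does the product coloring. -/
theorem lex_coloring_no_rainbow_K4 (n ℓ : ℕ) (χ : Fin n → Fin n → Fin ℓ)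
    (hχ : ¬ HasRainbowClique χ 4) :
    (∀ s : Finset (Fin n × Fin n), s.card = 4 →
      (∃ u ∈ s, ∃ w ∈ s, u ≠ w ∧ u.1 = w.1) →
      (∃ u ∈ s, ∃ w ∈ s, u.1 ≠ w.1) →
      ¬ IsRainbowOn (lexColoring χ) s) ∧
    ¬ HasRainbowClique (lexColoring χ) 4 := by
  refine ⟨fun s _ => not_isRainbowOn_lexColoring_of_mixed χ, ?_⟩
  rintro ⟨s, hs, hR⟩
  exact hχ (hs ▸ hasRainbowClique_of_isRainbowOn_lexColoring χ hR)
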